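/- arXiv:1710.03848 — 3 statements merged into one kernel-verified Lean document; each statement's English description precedes it below -/
import Mathlib

section
/- Let ℓ ≥ 0, let b_{−ℓ},…,b_0,…,b_ℓ ∈ {1,…,k}, and let J ⊆ M be an open set such that A_F ∩ (f_{b_{−1}}∘⋯∘f_{b_{−ℓ}})^{−1}(J) ≠ ∅ (with the empty composition equal to the identity when ℓ = 0). Then for every nonempty open set Q ⊆ Σ_k^+ = {1,…,k}^ℕ there exists n_0 ≥ 0 such that for every n ≥ n_0 there is a one-sided sequence ξ ∈ Q with F^n({ϑ ∈ Σ_k : ϑ_i = ξ_i for all i ≥ 0} × M) ⊆ [−ℓ; b_{−ℓ}…b_ℓ] × J, where [−ℓ; b_{−ℓ}…b_ℓ] = {ϑ ∈ Σ_k : ϑ_i = b_i for −ℓ ≤ i ≤ ℓ}. -/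
open Set Function Filter Topology

noncomputable section

/-- The shift map on two-sided sequences. -/
def shiftMap {k : ℕ} (θ : ℤ → Fin k) : ℤ → Fin k := fun i => θ (i + 1)

/-- The step skew product `F(θ, x) = (σ θ, f_{θ₀} x)`. -/
def skewProd {k : ℕ} {M : Type*} (f : Fin k → M → M) :
    (ℤ → Fin k) × M → (ℤ → Fin k) × M :=
  fun p => (shiftMap p.1, f (p.1 0) p.2)

/-- Backward composition `f_{θ₋₁} ∘ ⋯ ∘ f_{θ₋ₙ}`. -/
def bcomp {k : ℕ} {M : Type*} (f : Fin k → M → M) (θ : ℤ → Fin k) : ℕ → M → M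
  | 0 => id
  | n + 1 => bcomp f θ n ∘ f (θ (-((n : ℤ) + 1)))

/-- The spine `I_θ = ⋂_{n ≥ 1} f_{θ₋₁} ∘ ⋯ ∘ f_{θ₋ₙ}(M)`. -/
def spine {k : ℕ} {M : Type*} (f : Fin k → M → M) (θ : ℤ → Fin k) : Set M :=
  ⋂ n : ℕ, bcomp f θ (n + 1) '' Set.univ

/-- The set of weakly hyperbolic sequences: those `θ` whose spine is a singleton. -/
def weakHyp {k : ℕ} {M : Type*} (f : Fin k → M → M) : Set (ℤ → Fin k) :=
  {θ | ∃ x : M, spine f θ = {x}}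

/-- The ω-limit set of a point `z` under iteration of `F`: limits of subsequences
`F^{n_j}(z)` with `n_j → ∞`. -/
def omegaLim {α : Type*} [TopologicalSpace α] (F : α → α) (z : α) : Set α :=
  {w | ∃ φ : ℕ → ℕ, StrictMono φ ∧ Tendsto (fun j => F^[φ j] z) atTop (𝓝 w)}

/-!
By weak hyperbolicity some point of `A_F ∩ (f_{b₋₁} ∘ ⋯ ∘ f_{b₋ℓ})⁻¹(J)` is the coding of a
sequence `θ` whose backward images `f_{θ₋₁} ∘ ⋯ ∘ f_{θ₋ₘ}(M)` shrink to it, so by compactness one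
of them already lies in the open set `(f_{b₋₁} ∘ ⋯ ∘ f_{b₋ℓ})⁻¹(J)`. A one-sided sequence that
starts with a long enough prefix of a point of `Q` and then, ending at time `n`, reads the
word `θ₋ₘ … θ₋₁` followed by `b₋ℓ … b_ℓ`, is in `Q`, and `Fⁿ` maps its cylinder into
`[−ℓ; b₋ℓ … b_ℓ] × J`: the fibre coordinate of `Fⁿ(ϑ, x)` is `f_{b₋₁} ∘ ⋯ ∘ f_{b₋ℓ}` applied to a
point of `f_{θ₋₁} ∘ ⋯ ∘ f_{θ₋ₘ}(M)`.
-/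

open PiNat

section Composition

variable {k : ℕ} {M : Type*} (f : Fin k → M → M)

theorem bcomp_add (θ : ℤ → Fin k) (p : ℕ) :
    ∀ q : ℕ, bcomp f θ (p + q) = bcomp f θ p ∘ bcomp f (fun i => θ (i - p)) q
  | 0 => rfl
  | q + 1 => by
    rw [← add_assoc, bcomp, bcomp, bcomp_add θ p q, comp_assoc]
    congr 4
    push_cast
    ring

theorem bcomp_congr {θ η : ℤ → Fin k} :
    ∀ {n : ℕ}, (∀ i : ℤ, -(n : ℤ) ≤ i → i < 0 → θ i = η i) → bcomp f θ n = bcomp f η n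
  | 0, _ => rfl
  | n + 1, h => by
    rw [bcomp, bcomp, bcomp_congr fun i hi hi' => h i (by push_cast; omega) hi',
      h _ (by push_cast; omega) (by omega)]

theorem antitone_range_bcomp (θ : ℤ → Fin k) : Antitone fun n => range (bcomp f θ n) :=
  antitone_nat_of_succ_le fun _ => range_comp_subset_range _ _

theorem skewProd_iterate (n : ℕ) (θ : ℤ → Fin k) (x : M) :
    (skewProd f)^[n] (θ, x) = (fun i => θ (i + n), bcomp f (fun i => θ (i + n)) n x) := by
  induction n generalizing θ x with
  | zero => simp only [iterate_zero, id_eq, Nat.cast_zero, add_zero]; rfl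
  | succ n ih =>
    rw [iterate_succ_apply, skewProd, ih]
    have hshift : (fun i : ℤ => shiftMap θ (i + n)) = fun i => θ (i + (n + 1 : ℕ)) := by
      funext i
      simp only [shiftMap]
      push_cast
      ring_nf
    simp only [hshift, bcomp, comp_apply]
    congr 4
    push_cast
    ring

theorem continuous_bcomp [TopologicalSpace M] (hf : ∀ i, Continuous (f i)) (θ : ℤ → Fin k) :
    ∀ n, Continuous (bcomp f θ n)
  | 0 => continuous_id
  | n + 1 => (continuous_bcomp hf θ n).comp (hf _)

theorem exists_range_bcomp_subset [TopologicalSpace M] [CompactSpace M] [T2Space M]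
    (hf : ∀ i, Continuous (f i)) {θ : ℤ → Fin k} {U : Set M} (hU : IsOpen U)
    (hspine : spine f θ ⊆ U) : ∃ m, range (bcomp f θ m) ⊆ U := by
  have hcompact : ∀ n, IsCompact (range (bcomp f θ (n + 1))) :=
    fun n => isCompact_range (continuous_bcomp f hf θ (n + 1))
  have hdir : Directed (· ⊇ ·) fun n => range (bcomp f θ (n + 1)) :=
    ((antitone_range_bcomp f θ).comp_monotone fun _ _ h => Nat.succ_le_succ h).directed_ge
  obtain ⟨n, hn⟩ := exists_subset_nhds_of_isCompact hdir hcompact fun x hx =>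
    hU.mem_nhds (hspine (by simpa only [spine, image_univ] using hx))
  exact ⟨n + 1, hn⟩

end Composition

def splice {α : Type*} (θ b : ℤ → α) (ℓ : ℕ) : ℤ → α :=
  fun i => if i < -(ℓ : ℤ) then θ (i + ℓ) else b i

theorem bcomp_splice {k : ℕ} {M : Type*} (f : Fin k → M → M) (θ b : ℤ → Fin k) (ℓ m : ℕ) :
    bcomp f (splice θ b ℓ) (ℓ + m) = bcomp f b ℓ ∘ bcomp f θ m := by
  rw [bcomp_add]
  congr 1 <;> apply bcomp_congr <;> intro i hi hi' <;> simp only [splice]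
  · rw [if_neg (by omega)]
  · rw [if_pos (by omega), sub_add_cancel]

theorem exists_cylinder_subset {E : ℕ → Type*} [∀ n, TopologicalSpace (E n)]
    [∀ n, DiscreteTopology (E n)] {Q : Set (∀ n, E n)} (hQ : IsOpen Q) {ξ : ∀ n, E n}
    (hξ : ξ ∈ Q) : ∃ N, cylinder ξ N ⊆ Q := by
  obtain ⟨_, ⟨η, N, rfl⟩, hξη, hsub⟩ :=
    (isTopologicalBasis_cylinders E).exists_subset_of_mem_open hξ hQ
  exact ⟨N, mem_cylinder_iff_eq.1 hξη ▸ hsub⟩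

theorem image_of_cylinder_enters_open_set_general
    {k : ℕ} {M : Type*} [MetricSpace M] [CompactSpace M]
    (f : Fin k → M → M) (hf : ∀ i, Continuous (f i))
    (ρ : (ℤ → Fin k) → M) (hρ : ∀ θ ∈ weakHyp f, spine f θ = {ρ θ})
    (ℓ : ℕ) (b : ℤ → Fin k) (J : Set M) (hJ : IsOpen J)
    (hmeet : ((ρ '' weakHyp f) ∩ (bcomp f b ℓ) ⁻¹' J).Nonempty) :
    ∀ Q : Set (ℕ → Fin k), IsOpen Q → Q.Nonempty →
      ∃ n₀ : ℕ, ∀ n : ℕ, n₀ ≤ n → ∃ ξ ∈ Q,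
        (skewProd f)^[n] ''
            ({θ : ℤ → Fin k | ∀ i : ℕ, θ (i : ℤ) = ξ i} ×ˢ (Set.univ : Set M)) ⊆
          {θ : ℤ → Fin k | ∀ i : ℤ, -(ℓ : ℤ) ≤ i → i ≤ (ℓ : ℤ) → θ i = b i} ×ˢ J := by
  obtain ⟨_, ⟨θ₀, hθ₀, rfl⟩, hJθ₀⟩ := hmeet
  obtain ⟨m, hm⟩ := exists_range_bcomp_subset f hf (hJ.preimage (continuous_bcomp f hf b ℓ))
    ((hρ θ₀ hθ₀).trans_subset (singleton_subset_iff.2 hJθ₀))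
  rintro Q hQ ⟨ξ₀, hξ₀⟩
  obtain ⟨N, hN⟩ := exists_cylinder_subset hQ hξ₀
  refine ⟨N + ℓ + m, fun n hn => ⟨fun j => if j < N then ξ₀ j else splice θ₀ b ℓ (j - n),
    hN fun j hj => if_pos hj, ?_⟩⟩
  rintro _ ⟨⟨θ, x⟩, ⟨hθ, -⟩, rfl⟩
  have hsplice : ∀ i : ℤ, -((ℓ + m : ℕ) : ℤ) ≤ i → θ (i + n) = splice θ₀ b ℓ i := by
    intro i hi
    obtain ⟨j, hj⟩ := Int.eq_ofNat_of_zero_le (show 0 ≤ i + n by omega)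
    rw [hj]
    refine (hθ j).trans ?_
    dsimp only
    rw [if_neg (by omega), ← hj, add_sub_cancel_right]
  rw [skewProd_iterate]
  refine ⟨fun i hi _ => (hsplice i (by omega)).trans (if_neg (by omega)), ?_⟩
  have hrange : range (bcomp f (fun i => θ (i + n)) n) ⊆
      range (bcomp f (fun i => θ (i + n)) (ℓ + m)) :=
    antitone_range_bcomp f _ (show ℓ + m ≤ n by omega)
  rw [bcomp_congr f fun i hi _ => hsplice i hi, bcomp_splice] at hrange
  obtain ⟨y, hy⟩ := hrange (mem_range_self x)
  exact hy ▸ hm (mem_range_self y)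

/-- Lemma about reaching a cylinder × open set: if the target set `A_F = ρ(S_F)` meets
`(f_{b₋₁} ∘ ⋯ ∘ f_{b₋ℓ})⁻¹(J)` for an open `J ⊆ M`, then for every nonempty open set
`Q` of one-sided sequences there is `n₀` such that for every `n ≥ n₀` some `ξ ∈ Q`
satisfies `Fⁿ([ξ] × M) ⊆ [−ℓ; b₋ℓ … b_ℓ] × J`. -/
theorem image_of_cylinder_enters_open_set
    {k : ℕ} (hk : 1 ≤ k) {M : Type*} [MetricSpace M] [CompactSpace M] [Nonempty M]
    (f : Fin k → M → M) (hf : ∀ i, Continuous (f i))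
    (ρ : (ℤ → Fin k) → M) (hρ : ∀ θ ∈ weakHyp f, spine f θ = {ρ θ})
    (ℓ : ℕ) (b : ℤ → Fin k) (J : Set M) (hJ : IsOpen J)
    (hmeet : ((ρ '' weakHyp f) ∩ (bcomp f b ℓ) ⁻¹' J).Nonempty) :
    ∀ Q : Set (ℕ → Fin k), IsOpen Q → Q.Nonempty →
      ∃ n₀ : ℕ, ∀ n : ℕ, n₀ ≤ n → ∃ ξ ∈ Q,
        (skewProd f)^[n] ''
            ({θ : ℤ → Fin k | ∀ i : ℕ, θ (i : ℤ) = ξ i} ×ˢ (Set.univ : Set M)) ⊆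
          {θ : ℤ → Fin k | ∀ i : ℤ, -(ℓ : ℤ) ≤ i → i ≤ (ℓ : ℤ) → θ i = b i} ×ˢ J :=
  image_of_cylinder_enters_open_set_general f hf ρ hρ ℓ b J hJ hmeet
end
end

section
/- Assume ℙ(S_F) = 1. Then v_ℙ is the unique F-invariant Borel probability measure on Σ_k × M with marginal ℙ: F_* v_ℙ = v_ℙ, Π_* v_ℙ = ℙ, and every Borel probability measure μ on Σ_k × M satisfying F_* μ = μ and Π_* μ = ℙ equals v_ℙ. -/
open Set Function Filter Topology MeasureTheory

noncomputable section

/-!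
For `n ≥ 1`, `F^n` maps `Σ_k × M` into the set of `(θ, x)` with
`x ∈ f_{θ₋₁} ∘ ⋯ ∘ f_{θ₋ₙ}(M)`; these sets are closed and decrease to the graph of the spine
`{(θ, x) | x ∈ I_θ}`, so every `F`-invariant measure is carried by that graph. If moreover its
marginal is `ℙ`, almost every fibre of the graph is the singleton `{ρ θ}`, and the measure is
`ρ̂_* ℙ`. For `v_ℙ` itself: `F` maps the spine graph into itself, so `F_* v_ℙ` is carried by it
and has marginal `σ_* ℙ = ℙ`, hence equals `v_ℙ`.
-/

section Topology

variable {X Y : Type*} [TopologicalSpace X] [MetricSpace Y] [CompactSpace Y]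

theorem IsClosed.measurableSet_setOf_exists_fiber_eq_singleton [MeasurableSpace X]
    [OpensMeasurableSpace X] {C : Set (X × Y)} (hC : IsClosed C) :
    MeasurableSet {x | ∃ y, {y' | (x, y') ∈ C} = {y}} := by
  -- The pairs of points of a fiber at distance `≥ 1/(n+1)` form a closed set, whose
  -- projection is closed because `Y × Y` is compact.
  let far (n : ℕ) : Set (X × Y × Y) :=
    {q | (q.1, q.2.1) ∈ C ∧ (q.1, q.2.2) ∈ C ∧ ((n : ℝ) + 1)⁻¹ ≤ dist q.2.1 q.2.2}
  have hfar (n : ℕ) : IsClosed (far n) :=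
    (hC.preimage (continuous_fst.prodMk (continuous_fst.comp continuous_snd))).inter
      ((hC.preimage (continuous_fst.prodMk (continuous_snd.comp continuous_snd))).inter
        (_root_.isClosed_le continuous_const (continuous_dist.comp continuous_snd)))
  have hset : {x | ∃ y, {y' | (x, y') ∈ C} = {y}} =
      Prod.fst '' C ∩ (⋃ n, Prod.fst '' far n)ᶜ := by
    ext x
    simp only [mem_ofPred_eq, exists_eq_singleton_iff_nonempty_subsingleton,
      mem_inter_iff, mem_compl_iff, mem_iUnion, not_exists]
    refine and_congr (by simp [Set.Nonempty]) ⟨?_, ?_⟩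
    · rintro hsub n ⟨⟨x', y₁, y₂⟩, ⟨h₁, h₂, hd⟩, rfl⟩
      rw [hsub h₁ h₂, dist_self] at hd
      exact (not_le.2 (by positivity)) hd
    · intro hfar y₁ h₁ y₂ h₂
      refine eq_of_forall_dist_le fun ε hε => ?_
      obtain ⟨n, hn⟩ := exists_nat_one_div_lt hε
      refine le_of_lt (lt_of_not_ge fun hd => hfar n ⟨(x, y₁, y₂), ⟨h₁, h₂, ?_⟩, rfl⟩)
      simpa only [one_div] using hn.le.trans hd
  rw [hset]
  exact (isClosedMap_fst_of_compactSpace C hC).measurableSet.inter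
    (MeasurableSet.iUnion fun n =>
      (isClosedMap_fst_of_compactSpace _ (hfar n)).measurableSet).compl

end Topology

section Measure

variable {α β : Type*} [MeasurableSpace α] [MeasurableSpace β]

theorem MeasureTheory.Measure.eq_map_graph_of_ae_snd_eq {ν : Measure (α × β)} {μ : Measure α}
    {g : α → β} (hν : ν.map Prod.fst = μ) (hg : AEMeasurable (fun a => (a, g a)) μ)
    (h : ∀ᵐ p ∂ν, p.2 = g p.1) : ν = μ.map (fun a => (a, g a)) := by
  have hid : (fun a => (a, g a)) ∘ Prod.fst =ᵐ[ν] id := by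
    filter_upwards [h] with p hp
    exact Prod.ext rfl hp.symm
  calc ν = ν.map ((fun a => (a, g a)) ∘ Prod.fst) := by rw [Measure.map_congr hid, Measure.map_id]
    _ = μ.map (fun a => (a, g a)) := by
      rw [← hν, AEMeasurable.map_map_of_aemeasurable (hν ▸ hg) measurable_fst.aemeasurable]

end Measure

section SkewProduct

variable {k : ℕ} {M : Type*} (f : Fin k → M → M)

theorem bcomp_shiftMap_succ (θ : ℤ → Fin k) (n : ℕ) :
    bcomp f (shiftMap θ) (n + 1) = f (θ 0) ∘ bcomp f θ n := by
  induction n with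
  | zero => simp [bcomp, shiftMap]
  | succ n ih =>
    rw [bcomp, ih, bcomp, Function.comp_assoc, shiftMap]
    congr 4

theorem skewProd_iterate_apply (θ : ℤ → Fin k) (x : M) (n : ℕ) :
    (skewProd f)^[n] (θ, x) = (shiftMap^[n] θ, bcomp f (shiftMap^[n] θ) n x) := by
  induction n with
  | zero => rfl
  | succ n ih =>
    rw [Function.iterate_succ_apply', ih, Function.iterate_succ_apply' shiftMap, skewProd,
      bcomp_shiftMap_succ]
    rfl

theorem spine_subset_image_bcomp (θ : ℤ → Fin k) (n : ℕ) : spine f θ ⊆ bcomp f θ n '' univ := by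
  cases n with
  | zero => simp [bcomp]
  | succ n => exact iInter_subset _ n

theorem mapsTo_spine_shiftMap (θ : ℤ → Fin k) :
    MapsTo (f (θ 0)) (spine f θ) (spine f (shiftMap θ)) :=
  fun x hx => mem_iInter.2 fun n => by
    rw [bcomp_shiftMap_succ, image_comp]
    exact mem_image_of_mem _ (spine_subset_image_bcomp f θ n hx)

def bcompGraph (n : ℕ) : Set ((ℤ → Fin k) × M) := {p | p.2 ∈ bcomp f p.1 n '' univ}

def spineGraph : Set ((ℤ → Fin k) × M) := {p | p.2 ∈ spine f p.1}

theorem spineGraph_eq_iInter_bcompGraph : spineGraph f = ⋂ n, bcompGraph f (n + 1) := by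
  ext p
  simp [spineGraph, bcompGraph, spine]

theorem iterate_skewProd_mem_bcompGraph (p : (ℤ → Fin k) × M) (n : ℕ) :
    (skewProd f)^[n] p ∈ bcompGraph f n := by
  rw [bcompGraph, mem_ofPred_eq, skewProd_iterate_apply]
  exact mem_image_of_mem _ (mem_univ _)

theorem mapsTo_skewProd_spineGraph : MapsTo (skewProd f) (spineGraph f) (spineGraph f) :=
  fun p hp => mapsTo_spine_shiftMap f p.1 hp

variable [TopologicalSpace M]

theorem continuous_shiftMap : Continuous (shiftMap : (ℤ → Fin k) → ℤ → Fin k) :=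
  continuous_pi fun i => continuous_apply (i + 1)

theorem continuous_apply_coord {f : Fin k → M → M} (hf : ∀ i, Continuous (f i)) (m : ℤ) :
    Continuous fun p : (ℤ → Fin k) × M => f (p.1 m) p.2 := by
  have hf' : Continuous fun q : Fin k × M => f q.1 q.2 := continuous_prod_of_discrete_left.2 hf
  exact hf'.comp (by fun_prop : Continuous fun p : (ℤ → Fin k) × M => (p.1 m, p.2))

theorem continuous_skewProd {f : Fin k → M → M} (hf : ∀ i, Continuous (f i)) :
    Continuous (skewProd f) :=
  (continuous_shiftMap.comp continuous_fst).prodMk (continuous_apply_coord hf 0)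

theorem continuous_bcomp_uncurry {f : Fin k → M → M} (hf : ∀ i, Continuous (f i)) (n : ℕ) :
    Continuous fun p : (ℤ → Fin k) × M => bcomp f p.1 n p.2 := by
  induction n with
  | zero => exact continuous_snd
  | succ n ih => exact ih.comp (continuous_fst.prodMk (continuous_apply_coord hf _))

variable [CompactSpace M] [T2Space M]

theorem isClosed_bcompGraph {f : Fin k → M → M} (hf : ∀ i, Continuous (f i)) (n : ℕ) :
    IsClosed (bcompGraph f n) := by
  have : bcompGraph f n = range fun p : (ℤ → Fin k) × M => (p.1, bcomp f p.1 n p.2) := by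
    ext ⟨θ, x⟩
    simp [bcompGraph]
  rw [this]
  exact (isCompact_range (continuous_fst.prodMk (continuous_bcomp_uncurry hf n))).isClosed

theorem isClosed_spineGraph {f : Fin k → M → M} (hf : ∀ i, Continuous (f i)) :
    IsClosed (spineGraph f) := by
  rw [spineGraph_eq_iInter_bcompGraph]
  exact isClosed_iInter fun n => isClosed_bcompGraph hf (n + 1)

end SkewProduct

theorem measurableSet_weakHyp {k : ℕ} {M : Type*} [MetricSpace M] [CompactSpace M]
    {f : Fin k → M → M} (hf : ∀ i, Continuous (f i)) : MeasurableSet (weakHyp f) :=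
  (isClosed_spineGraph hf).measurableSet_setOf_exists_fiber_eq_singleton

theorem ae_mem_weakHyp {k : ℕ} {M : Type*} [MetricSpace M] [CompactSpace M]
    {f : Fin k → M → M} (hf : ∀ i, Continuous (f i)) {ℙ : Measure (ℤ → Fin k)}
    [IsProbabilityMeasure ℙ] (hS : ℙ (weakHyp f) = 1) : ∀ᵐ θ ∂ℙ, θ ∈ weakHyp f :=
  (ae_mem_iff_measure_eq (measurableSet_weakHyp hf).nullMeasurableSet).2
    (by rw [hS, measure_univ])

section Invariant

variable {k : ℕ} {M : Type*} [MetricSpace M] [CompactSpace M] [MeasurableSpace M]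
  {f : Fin k → M → M}

theorem eq_map_coding_of_ae_mem_spineGraph (hf : ∀ i, Continuous (f i))
    {ℙ : Measure (ℤ → Fin k)} [IsProbabilityMeasure ℙ] (hS : ℙ (weakHyp f) = 1)
    {ρ : (ℤ → Fin k) → M} (hρ : ∀ θ ∈ weakHyp f, spine f θ = {ρ θ})
    (hρm : AEMeasurable (fun θ => (θ, ρ θ)) ℙ) {ν : Measure ((ℤ → Fin k) × M)}
    (hν : ν.map Prod.fst = ℙ) (hspine : ∀ᵐ p ∂ν, p ∈ spineGraph f) :
    ν = ℙ.map (fun θ => (θ, ρ θ)) := by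
  refine Measure.eq_map_graph_of_ae_snd_eq hν hρm ?_
  have hW : ∀ᵐ p ∂ν, p.1 ∈ weakHyp f :=
    ae_of_ae_map measurable_fst.aemeasurable (hν ▸ ae_mem_weakHyp hf hS)
  filter_upwards [hspine, hW] with p hp hpW
  simpa [spineGraph, hρ p.1 hpW] using hp

variable [BorelSpace M]

theorem ae_mem_spineGraph_map_skewProd (hf : ∀ i, Continuous (f i))
    {ν : Measure ((ℤ → Fin k) × M)} (hν : ∀ᵐ p ∂ν, p ∈ spineGraph f) :
    ∀ᵐ p ∂ν.map (skewProd f), p ∈ spineGraph f :=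
  (ae_map_iff (continuous_skewProd hf).aemeasurable (isClosed_spineGraph hf).measurableSet).2
    (hν.mono fun _ hp => mapsTo_skewProd_spineGraph f hp)

theorem ae_mem_spineGraph_of_map_skewProd_eq (hf : ∀ i, Continuous (f i))
    {μ : Measure ((ℤ → Fin k) × M)} (hμ : μ.map (skewProd f) = μ) :
    ∀ᵐ p ∂μ, p ∈ spineGraph f := by
  have hF : MeasurePreserving (skewProd f) μ μ := ⟨(continuous_skewProd hf).measurable, hμ⟩
  simp only [spineGraph_eq_iInter_bcompGraph, mem_iInter, ae_all_iff]
  intro n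
  rw [← (hF.iterate (n + 1)).map_eq]
  exact (ae_map_iff (hF.iterate (n + 1)).measurable.aemeasurable
    (isClosed_bcompGraph hf (n + 1)).measurableSet).2
      (ae_of_all _ fun p => iterate_skewProd_mem_bcompGraph f p (n + 1))

theorem map_fst_map_skewProd (hf : ∀ i, Continuous (f i)) (ν : Measure ((ℤ → Fin k) × M)) :
    (ν.map (skewProd f)).map Prod.fst = (ν.map Prod.fst).map shiftMap := by
  rw [Measure.map_map measurable_fst (continuous_skewProd hf).measurable,
    Measure.map_map continuous_shiftMap.measurable measurable_fst]
  rfl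

end Invariant

theorem attracting_measure_unique_invariant_general
    {k : ℕ} {M : Type*} [MetricSpace M] [CompactSpace M]
    [MeasurableSpace M] [BorelSpace M]
    (f : Fin k → M → M) (hf : ∀ i, Continuous (f i))
    (ℙ : Measure (ℤ → Fin k)) [IsProbabilityMeasure ℙ]
    (hinv : Measure.map shiftMap ℙ = ℙ)
    (hS : ℙ (weakHyp f) = 1)
    (ρ : (ℤ → Fin k) → M) (hρ : ∀ θ ∈ weakHyp f, spine f θ = {ρ θ})
    (hρm : AEMeasurable (fun θ => (θ, ρ θ) : (ℤ → Fin k) → (ℤ → Fin k) × M) ℙ) :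
    Measure.map (skewProd f) (Measure.map (fun θ => (θ, ρ θ)) ℙ) =
        Measure.map (fun θ => (θ, ρ θ)) ℙ ∧
      Measure.map Prod.fst (Measure.map (fun θ => (θ, ρ θ)) ℙ) = ℙ ∧
      ∀ μ : Measure ((ℤ → Fin k) × M), IsProbabilityMeasure μ →
        Measure.map (skewProd f) μ = μ → Measure.map Prod.fst μ = ℙ →
        μ = Measure.map (fun θ => (θ, ρ θ)) ℙ := by
  have hmarg : (ℙ.map fun θ => (θ, ρ θ)).map Prod.fst = ℙ := by
    rw [AEMeasurable.map_map_of_aemeasurable measurable_fst.aemeasurable hρm]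
    exact Measure.map_id
  have hspine : ∀ᵐ p ∂ℙ.map fun θ => (θ, ρ θ), p ∈ spineGraph f := by
    refine (ae_map_iff hρm (isClosed_spineGraph hf).measurableSet).2 ?_
    filter_upwards [ae_mem_weakHyp hf hS] with θ hθ
    simp [hρ θ hθ]
  refine ⟨?_, hmarg, fun μ _ hμF hμ => eq_map_coding_of_ae_mem_spineGraph hf hS hρ hρm hμ
    (ae_mem_spineGraph_of_map_skewProd_eq hf hμF)⟩
  refine eq_map_coding_of_ae_mem_spineGraph hf hS hρ hρm ?_
    (ae_mem_spineGraph_map_skewProd hf hspine)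
  rw [map_fst_map_skewProd hf, hmarg, hinv]

/-- If `ℙ(S_F) = 1`, then `v_ℙ = ρ̂_* ℙ` is the unique `F`-invariant Borel probability
measure on `Σ_k × M` with marginal `ℙ`. -/
theorem attracting_measure_unique_invariant
    {k : ℕ} (hk : 1 ≤ k) {M : Type*} [MetricSpace M] [CompactSpace M] [Nonempty M]
    [MeasurableSpace M] [BorelSpace M]
    (f : Fin k → M → M) (hf : ∀ i, Continuous (f i))
    (ℙ : Measure (ℤ → Fin k)) [IsProbabilityMeasure ℙ]
    (hinv : Measure.map shiftMap ℙ = ℙ)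
    (hS : ℙ (weakHyp f) = 1)
    (ρ : (ℤ → Fin k) → M) (hρ : ∀ θ ∈ weakHyp f, spine f θ = {ρ θ})
    (hρm : AEMeasurable (fun θ => (θ, ρ θ) : (ℤ → Fin k) → (ℤ → Fin k) × M) ℙ) :
    Measure.map (skewProd f) (Measure.map (fun θ => (θ, ρ θ)) ℙ) =
        Measure.map (fun θ => (θ, ρ θ)) ℙ ∧
      Measure.map Prod.fst (Measure.map (fun θ => (θ, ρ θ)) ℙ) = ℙ ∧
      ∀ μ : Measure ((ℤ → Fin k) × M), IsProbabilityMeasure μ →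
        Measure.map (skewProd f) μ = μ → Measure.map Prod.fst μ = ℙ →
        μ = Measure.map (fun θ => (θ, ρ θ)) ℙ :=
  attracting_measure_unique_invariant_general f hf ℙ hinv hS ρ hρ hρm
end
end

section
/- Let ℙ be a σ-invariant Borel probability measure on Σ_k. Assume there exist an integer N ≥ 1, a constant C > 0 and λ ∈ (0,1) such that ∫_{Σ_k} diam(f_{ϑ_{−1}}∘⋯∘f_{ϑ_{−n}}(M)) dℙ(ϑ) ≤ C λ^n for every n ≥ N. Then ℙ(S_F) = 1, i.e., for ℙ-a.e. ϑ the nested intersection ⋂_{n≥1} f_{ϑ_{−1}}∘⋯∘f_{ϑ_{−n}}(M) is a singleton. -/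
open Set Function Filter Topology MeasureTheory

noncomputable section

set_option linter.unusedSectionVars false

section aux
variable {k : ℕ} {M : Type*} [MetricSpace M] [CompactSpace M] [Nonempty M]
  (f : Fin k → M → M)

lemma bcomp_continuous' (hf : ∀ i, Continuous (f i)) (θ : ℤ → Fin k) (n : ℕ) :
    Continuous (bcomp f θ n) := by
  induction n with
  | zero => exact continuous_id
  | succ n ih => exact ih.comp (hf _)

lemma bcomp_succ_subset' (θ : ℤ → Fin k) (n : ℕ) :
    bcomp f θ (n + 1) '' (univ : Set M) ⊆ bcomp f θ n '' univ := by
  have : bcomp f θ (n + 1) '' (univ : Set M)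
      = bcomp f θ n '' (f (θ (-((n : ℤ) + 1))) '' univ) := by
    rw [show bcomp f θ (n+1) = bcomp f θ n ∘ f (θ (-((n : ℤ) + 1))) from rfl, image_comp]
  rw [this]
  exact image_mono (subset_univ _)

lemma weakHyp_of_diam_tendsto' (hf : ∀ i, Continuous (f i)) (θ : ℤ → Fin k)
    (h : Tendsto (fun n => Metric.diam (bcomp f θ n '' (univ : Set M))) atTop (𝓝 0)) :
    θ ∈ weakHyp f := by
  set K : ℕ → Set M := fun n => bcomp f θ (n + 1) '' univ with hK
  have hKc : ∀ n, IsCompact (K n) := fun n =>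
    isCompact_univ.image (bcomp_continuous' f hf θ (n + 1))
  have hKne : ∀ n, (K n).Nonempty := fun n => univ_nonempty.image _
  have hKsub : ∀ n, K (n + 1) ⊆ K n := fun n => bcomp_succ_subset' f θ (n + 1)
  obtain ⟨x, hx⟩ := IsCompact.nonempty_iInter_of_sequence_nonempty_isCompact_isClosed
    K hKsub hKne (hKc 0) (fun n => (hKc n).isClosed)
  have hsp : spine f θ = ⋂ n, K n := rfl
  have hdiam0 : Metric.diam (spine f θ) = 0 := by
    have hb : ∀ n, Metric.diam (spine f θ) ≤ Metric.diam (K n) := fun n =>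
      Metric.diam_mono (hsp ▸ iInter_subset K n) (hKc n).isBounded
    have htend : Tendsto (fun n => Metric.diam (K n)) atTop (𝓝 0) := by
      have := h.comp (tendsto_add_atTop_nat 1)
      exact this
    exact le_antisymm (ge_of_tendsto' htend hb) Metric.diam_nonneg
  refine ⟨x, subset_antisymm ?_ ?_⟩
  · intro y hy
    have hxs : x ∈ spine f θ := hsp ▸ hx
    have : dist y x ≤ Metric.diam (spine f θ) :=
      Metric.dist_le_diam_of_mem
        (((hKc 0).isBounded).subset (hsp ▸ iInter_subset K 0)) hy hxs
    rw [hdiam0] at this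
    have : dist y x = 0 := le_antisymm this dist_nonneg
    simpa [dist_eq_zero] using this
  · exact singleton_subset_iff.mpr (hsp ▸ hx)

lemma bcomp_congr' {θ θ' : ℤ → Fin k} (n : ℕ)
    (h : ∀ m : ℕ, m < n → θ (-(m : ℤ) - 1) = θ' (-(m : ℤ) - 1)) :
    bcomp f θ n = bcomp f θ' n := by
  induction n with
  | zero => rfl
  | succ n ih =>
    have e : -((n : ℤ) + 1) = -(n : ℤ) - 1 := by ring
    have h1 : θ (-((n : ℤ) + 1)) = θ' (-((n : ℤ) + 1)) := by
      rw [e]; exact h n (Nat.lt_succ_self n)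
    simp only [bcomp]
    rw [ih (fun m hm => h m (hm.trans (Nat.lt_succ_self n))), h1]

lemma diam_bcomp_measurable' (hk : 1 ≤ k) (n : ℕ) :
    Measurable (fun θ : ℤ → Fin k => Metric.diam (bcomp f θ n '' (univ : Set M))) := by
  set ext : (Fin n → Fin k) → (ℤ → Fin k) := fun v j =>
    if h : 0 ≤ -j - 1 ∧ (-j - 1).toNat < n then v ⟨(-j - 1).toNat, h.2⟩ else ⟨0, hk⟩ with hext
  have key : ∀ θ : ℤ → Fin k,
      bcomp f θ n = bcomp f (ext (fun i => θ (-(i : ℤ) - 1))) n := by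
    intro θ
    apply bcomp_congr'
    intro m hm
    have e1 : -(-(m : ℤ) - 1) - 1 = (m : ℤ) := by ring
    have h0 : 0 ≤ -(-(m : ℤ) - 1) - 1 := by omega
    have h2 : (-(-(m : ℤ) - 1) - 1).toNat < n := by omega
    simp only [hext]
    rw [dif_pos ⟨h0, h2⟩]
    congr 1
    omega
  have heq : (fun θ : ℤ → Fin k => Metric.diam (bcomp f θ n '' (univ : Set M)))
      = (fun v : Fin n → Fin k => Metric.diam (bcomp f (ext v) n '' (univ : Set M)))
        ∘ (fun θ i => θ (-(i : ℤ) - 1)) := funext fun θ => by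
    simp only [comp_apply]; rw [key θ]
  rw [heq]
  exact (measurable_of_countable _).comp
    (measurable_pi_lambda _ fun i => measurable_pi_apply _)

end aux

/-- If the expected diameter of the backward images decays exponentially, then
`ℙ`-almost every sequence is weakly hyperbolic: `ℙ(S_F) = 1`. -/
theorem ae_weakly_hyperbolic_of_integral_diam_exponentially_small
    {k : ℕ} (hk : 1 ≤ k) {M : Type*} [MetricSpace M] [CompactSpace M] [Nonempty M]
    (f : Fin k → M → M) (hf : ∀ i, Continuous (f i))
    (ℙ : Measure (ℤ → Fin k)) [IsProbabilityMeasure ℙ]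
    (hinv : Measure.map shiftMap ℙ = ℙ)
    (N : ℕ) (hN : 1 ≤ N) (C : ℝ) (hC : 0 < C) (lam : ℝ) (hlam0 : 0 < lam)
    (hlam1 : lam < 1)
    (hdecay : ∀ n : ℕ, N ≤ n →
      (∫ θ, Metric.diam (bcomp f θ n '' Set.univ) ∂ℙ) ≤ C * lam ^ n) :
    ℙ (weakHyp f) = 1 := by
  set g : ℕ → (ℤ → Fin k) → ℝ := fun n θ => Metric.diam (bcomp f θ n '' univ) with hg
  have hgmeas : ∀ n, Measurable (g n) := fun n => diam_bcomp_measurable' f hk n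
  have hg0 : ∀ n θ, 0 ≤ g n θ := fun n θ => Metric.diam_nonneg
  set D : ℝ := Metric.diam (univ : Set M) with hD
  have hgD : ∀ n θ, g n θ ≤ D := fun n θ =>
    Metric.diam_mono (subset_univ _) isCompact_univ.isBounded
  have hint : ∀ n, Integrable (g n) ℙ := by
    intro n
    refine Integrable.mono' (integrable_const D) (hgmeas n).aestronglyMeasurable ?_
    exact ae_of_all _ fun θ => by rw [Real.norm_of_nonneg (hg0 n θ)]; exact hgD n θ
  have hlint : ∀ n, N ≤ n →
      (∫⁻ θ, ENNReal.ofReal (g n θ) ∂ℙ) ≤ ENNReal.ofReal (C * lam ^ n) := by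
    intro n hn
    rw [← ofReal_integral_eq_lintegral_ofReal (hint n) (ae_of_all _ (hg0 n))]
    exact ENNReal.ofReal_le_ofReal (hdecay n hn)
  have hsummable : Summable (fun m : ℕ => C * lam ^ (m + N)) := by
    have : (fun m : ℕ => C * lam ^ (m + N)) = fun m => (C * lam ^ N) * lam ^ m :=
      funext fun m => by rw [pow_add]; ring
    rw [this]
    exact (summable_geometric_of_lt_one hlam0.le hlam1).mul_left _
  have hsum : (∫⁻ θ, ∑' m : ℕ, ENNReal.ofReal (g (m + N) θ) ∂ℙ) < ⊤ := by
    rw [lintegral_tsum (fun m => ((hgmeas (m + N)).ennreal_ofReal).aemeasurable)]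
    calc ∑' m : ℕ, ∫⁻ θ, ENNReal.ofReal (g (m + N) θ) ∂ℙ
        ≤ ∑' m : ℕ, ENNReal.ofReal (C * lam ^ (m + N)) :=
          ENNReal.tsum_le_tsum fun m => hlint _ (Nat.le_add_left _ _)
      _ = ENNReal.ofReal (∑' m : ℕ, C * lam ^ (m + N)) :=
          (ENNReal.ofReal_tsum_of_nonneg
            (fun m => by positivity) hsummable).symm
      _ < ⊤ := ENNReal.ofReal_lt_top
  have hae : ∀ᵐ θ ∂ℙ, (∑' m : ℕ, ENNReal.ofReal (g (m + N) θ)) < ⊤ :=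
    ae_lt_top (Measurable.ennreal_tsum fun m => (hgmeas (m + N)).ennreal_ofReal)
      hsum.ne
  have haeWH : ∀ᵐ θ ∂ℙ, θ ∈ weakHyp f := by
    filter_upwards [hae] with θ hθ
    have h1 : Tendsto (fun m => ENNReal.ofReal (g (m + N) θ)) atTop (𝓝 0) :=
      ENNReal.tendsto_atTop_zero_of_tsum_ne_top hθ.ne
    have h2 : Tendsto (fun m => g (m + N) θ) atTop (𝓝 0) := by
      have h3 := (ENNReal.tendsto_toReal (show (0:ENNReal) ≠ ⊤ by simp)).comp h1
      have h3' : ENNReal.toReal ∘ (fun m => ENNReal.ofReal (g (m + N) θ))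
          = fun m => g (m + N) θ := funext fun m => ENNReal.toReal_ofReal (hg0 _ θ)
      rw [h3'] at h3
      simpa using h3
    have h4 : Tendsto (fun n => g n θ) atTop (𝓝 0) :=
      (tendsto_add_atTop_iff_nat N).mp h2
    exact weakHyp_of_diam_tendsto' f hf θ h4
  have h1 : ℙ (weakHyp f)ᶜ = 0 := by
    rw [ae_iff] at haeWH
    exact haeWH
  refine le_antisymm prob_le_one ?_
  calc (1 : ENNReal) = ℙ univ := measure_univ.symm
    _ = ℙ (weakHyp f ∪ (weakHyp f)ᶜ) := by rw [union_compl_self]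
    _ ≤ ℙ (weakHyp f) + ℙ (weakHyp f)ᶜ := measure_union_le _ _
    _ = ℙ (weakHyp f) := by rw [h1, add_zero]
end
end
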